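/- Let S be a dense subsemigroup of ((0,∞),+), let u,v ∈ ℕ ∪ {ω}, and let A be a u×v admissible matrix. Then I₀(A;S) is compact, and I₀(A;S) ≠ ∅ if and only if A is image partition regular near zero over S. Moreover, if u,v ∈ ℕ and A is image partition regular near zero over S, then I₀(A;S) is a subsemigroup of (βS,+). -/

import Mathlib

/-!
`I₀(A;S)` is cut out of `βℝ` by `S ∈ p` and the conditions "`P ∈ p` implies that `P` contains
images `A x⃗` arbitrarily close to `0`", each closed, so it is compact. If `A` is image partition
regular near zero, `S` is not covered by finitely many sets `B` failing this: colour each point of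
`S` by a `B` containing it, and a monochromatic image below all their thresholds lands in one `B`.
So `S` and the complements of the failing sets have the finite intersection property, and any
ultrafilter containing them lies in `I₀(A;S)`. For finite `A`, images `A x⃗` chosen for `p` and then
`A y⃗` for `q` give `A (x⃗ + y⃗)` for `p + q`.
-/

noncomputable section

/-- Addition of ultrafilters on ℝ: `B ∈ uAdd p q ↔ {x | {y | x + y ∈ B} ∈ q} ∈ p`. -/
def uAdd (p q : Ultrafilter ℝ) : Ultrafilter ℝ :=
  p.bind fun x => q.map fun y => x + y

/-- `S` is a subsemigroup of `((0,∞),+)`. -/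
def IsPosSubsemigroup (S : Set ℝ) : Prop :=
  S.Nonempty ∧ S ⊆ Set.Ioi 0 ∧ ∀ x ∈ S, ∀ y ∈ S, x + y ∈ S

/-- `0` is a limit point of `S`. -/
def DenseNearZero (S : Set ℝ) : Prop := ∀ ε > 0, ∃ x ∈ S, x < ε

/-- the `i`-th entry of `A x⃗`. -/
def mEntry {ι κ : Type} (A : ι → κ → ℚ) (x : κ → ℝ) (i : ι) : ℝ :=
  ∑ᶠ j, (A i j : ℝ) * x j

/-- admissible matrix: no zero row, finitely many nonzero entries in each row. -/
def Admissible {ι κ : Type} (A : ι → κ → ℚ) : Prop :=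
  (∀ i, A i ≠ 0) ∧ ∀ i, (Function.support (A i)).Finite

/-- `A` is image partition regular over `S`. -/
def IPRover {ι κ : Type} (S : Set ℝ) (A : ι → κ → ℚ) : Prop :=
  ∀ (k : ℕ) (c : ℝ → Fin (k + 1)), ∃ x : κ → ℝ, (∀ j, x j ∈ S) ∧
    ∃ m : Fin (k + 1), ∀ i, mEntry A x i ∈ S \ {0} ∧ c (mEntry A x i) = m

/-- `A` is image partition regular near zero over `S`. -/
def IPRNearZero {ι κ : Type} (S : Set ℝ) (A : ι → κ → ℚ) : Prop :=
  ∀ (k : ℕ) (c : ℝ → Fin (k + 1)), ∀ δ > (0 : ℝ), ∃ x : κ → ℝ, (∀ j, x j ∈ S) ∧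
    ∃ m : Fin (k + 1), ∀ i, mEntry A x i ∈ S \ {0} ∧
      mEntry A x i ∈ Set.Ioo 0 δ ∧ c (mEntry A x i) = m

/-- `I(A;S)`. -/
def ISet {ι κ : Type} (S : Set ℝ) (A : ι → κ → ℚ) : Set (Ultrafilter ℝ) :=
  {p | S ∈ p ∧ ∀ P ∈ p, ∃ x : κ → ℝ, (∀ j, x j ∈ S) ∧ ∀ i, mEntry A x i ∈ P}

/-- `O⁺(S)`. -/
def Oplus (S : Set ℝ) : Set (Ultrafilter ℝ) :=
  {p | ∀ ε > (0 : ℝ), Set.Ioo 0 ε ∩ S ∈ p}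

/-- `I₀(A;S)`. -/
def I0Set {ι κ : Type} (S : Set ℝ) (A : ι → κ → ℚ) : Set (Ultrafilter ℝ) :=
  {p | S ∈ p ∧ ∀ P ∈ p, ∀ ε > (0 : ℝ), ∃ x : κ → ℝ, (∀ j, x j ∈ S) ∧
      ∀ i, mEntry A x i ∈ P ∩ Set.Ioo 0 ε}

/-- multiplication of an ultrafilter by a real constant. -/
def mulU (c : ℝ) (p : Ultrafilter ℝ) : Ultrafilter ℝ := p.map fun x => c * x

/-- `q·p = q-lim_{n} (n·p)` for `q ∈ βℕ`, `p ∈ βℝ`. -/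
def actU (q : Ultrafilter ℕ) (p : Ultrafilter ℝ) : Ultrafilter ℝ :=
  q.bind fun n => p.map fun x => (n : ℝ) * x

/-- `I` is a two-sided ideal of `T ⊆ βℝ`. -/
def IsIdealIn (T I : Set (Ultrafilter ℝ)) : Prop :=
  I.Nonempty ∧ I ⊆ T ∧ ∀ p ∈ T, ∀ q ∈ I, uAdd p q ∈ I ∧ uAdd q p ∈ I

/-- the smallest two-sided ideal of `T`. -/
def KK (T : Set (Ultrafilter ℝ)) : Set (Ultrafilter ℝ) :=
  ⋂₀ {I | IsIdealIn T I}

/-- `L` is a left ideal of `T`. -/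
def IsLeftIdealIn (T L : Set (Ultrafilter ℝ)) : Prop :=
  L.Nonempty ∧ L ⊆ T ∧ ∀ p ∈ T, ∀ q ∈ L, uAdd p q ∈ L

/-- `L` is a minimal left ideal of `T`. -/
def IsMinLeftIdealIn (T L : Set (Ultrafilter ℝ)) : Prop :=
  IsLeftIdealIn T L ∧ ∀ L', IsLeftIdealIn T L' → L' ⊆ L → L' = L

/-- `C ⊆ S` is central near zero. -/
def CentralNearZero (S C : Set ℝ) : Prop :=
  ∃ p : Ultrafilter ℝ, p ∈ KK (Oplus S) ∧ uAdd p p = p ∧ C ∈ p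

/-- `C` is central* near zero: it belongs to every minimal idempotent of `O⁺(S)`. -/
def CentralStarNearZero (S C : Set ℝ) : Prop :=
  ∀ p : Ultrafilter ℝ, p ∈ KK (Oplus S) → uAdd p p = p → C ∈ p

/-- `C` is IP* near zero: it belongs to every idempotent of `O⁺(S)`. -/
def IPStarNearZero (S C : Set ℝ) : Prop :=
  ∀ p : Ultrafilter ℝ, p ∈ Oplus S → uAdd p p = p → C ∈ p

/-- `A` is centrally image partition regular near zero over `S`. -/
def CIPRNearZero {ι κ : Type} (S : Set ℝ) (A : ι → κ → ℚ) : Prop :=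
  ∀ C : Set ℝ, CentralNearZero S C →
    ∃ x : κ → ℝ, (∀ j, x j ∈ S) ∧ ∀ i, mEntry A x i ∈ C

/-- `T` is thick near zero in `S`. -/
def ThickNearZero (S T : Set ℝ) : Prop :=
  ∃ L : Set (Ultrafilter ℝ), IsLeftIdealIn (Oplus S) L ∧ ∀ p ∈ L, T ∈ p

/-- membership in the class `𝓜₀(S)`. -/
def MemM0 {ι κ : Type} (S : Set ℝ) (A : ι → κ → ℚ) : Prop :=
  Admissible A ∧ ∀ T : Set ℝ, ThickNearZero S T →
    ∀ (k : ℕ) (c : ℝ → Fin (k + 1)), ∃ x : κ → ℝ, (∀ j, x j ∈ S) ∧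
      ∃ m : Fin (k + 1), ∀ i, mEntry A x i ∈ T ∧ c (mEntry A x i) = m

/-- `A` is (finite) image partition regular (over ℕ). -/
def IPRoverNat {u v : ℕ} (A : Fin u → Fin v → ℚ) : Prop :=
  ∀ (k : ℕ) (c : ℕ → Fin (k + 1)), ∃ x : Fin v → ℕ, ∃ m : Fin (k + 1),
    ∀ i, ∃ n : ℕ, 0 < n ∧ (n : ℚ) = ∑ j, A i j * (x j : ℚ) ∧ c n = m

/-- the compressed form of a finitely supported integer vector: delete the zeros,
then collapse equal consecutive entries. -/
def compress (r : ℕ → ℤ) (hr : (Function.support r).Finite) : List ℤ :=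
  ((hr.toFinset.sort (· ≤ ·)).map r).destutter (· ≠ ·)

/-- `M` is the Milliken–Taylor matrix `MT(a⃗)`: its rows are exactly the finitely
supported integer vectors with compressed form `a⃗`. -/
def IsMTMatrix (a : List ℤ) (M : ℕ → ℕ → ℚ) : Prop :=
  (∀ i, ∃ (r : ℕ → ℤ) (hr : (Function.support r).Finite),
      (M i = fun j => (r j : ℚ)) ∧ compress r hr = a) ∧
  ∀ (r : ℕ → ℤ) (hr : (Function.support r).Finite),
    compress r hr = a → ∃ i, M i = fun j => (r j : ℚ)

/-- the sum `f 0 + (f 1 + (⋯ + f k))` in `(βℝ, +)`. -/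
def finSumU : ∀ {k : ℕ}, (Fin (k + 1) → Ultrafilter ℝ) → Ultrafilter ℝ
  | 0, f => f 0
  | _ + 1, f => uAdd (f 0) (finSumU fun i => f i.succ)

end

namespace Ultrafilter

variable {α : Type*}

theorem isClosed_setOf_forall_mem_imp (𝓕 : Set (Set α)) :
    IsClosed {p : Ultrafilter α | ∀ P ∈ p, P ∈ 𝓕} := by
  have h : {p : Ultrafilter α | ∀ P ∈ p, P ∈ 𝓕} = ⋂ P ∈ 𝓕ᶜ, {p | Pᶜ ∈ p} := by
    ext p
    simp only [Set.mem_ofPred_eq, Set.mem_iInter, Set.mem_compl_iff, compl_mem_iff_notMem]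
    exact forall_congr' fun P => not_imp_not.symm
  rw [h]
  exact isClosed_biInter fun P _ => ultrafilter_isClosed_basic Pᶜ

theorem exists_mem_forall_mem_of_diff_sUnion_nonempty {S : Set α} {𝓕 : Set (Set α)}
    (h : ∀ 𝓑 : Finset (Set α), (∀ B ∈ 𝓑, B ∉ 𝓕) → (S \ ⋃₀ ↑𝓑).Nonempty) :
    ∃ p : Ultrafilter α, S ∈ p ∧ ∀ P ∈ p, P ∈ 𝓕 := by
  classical
  obtain ⟨p, hp⟩ := exists_ultrafilter_of_finite_inter_nonempty (insert S (compl '' 𝓕ᶜ))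
    fun T hT => by
      obtain ⟨y, hyS, hy⟩ := h ((T.filter (· ≠ S)).image compl) fun B hB => by
        obtain ⟨t, ht, rfl⟩ := Finset.mem_image.1 hB
        obtain ⟨htT, htS⟩ := Finset.mem_filter.1 ht
        obtain ⟨B, hB𝓕, rfl⟩ := (hT htT).resolve_left htS
        rwa [compl_compl]
      refine ⟨y, fun t ht => ?_⟩
      by_cases htS : t = S
      · exact htS ▸ hyS
      · by_contra hyt
        exact hy ⟨tᶜ, Finset.mem_image_of_mem _ (Finset.mem_filter.2 ⟨ht, htS⟩), hyt⟩
  refine ⟨p, hp (Set.mem_insert S _), fun P hPp => by_contra fun hP𝓕 => ?_⟩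
  exact p.compl_mem_iff_notMem.1 (hp (Set.mem_insert_of_mem S ⟨P, hP𝓕, rfl⟩)) hPp

end Ultrafilter

theorem mem_uAdd {p q : Ultrafilter ℝ} {s : Set ℝ} :
    s ∈ uAdd p q ↔ {x | {y | x + y ∈ s} ∈ q} ∈ p := Iff.rfl

section ImageNearZero

variable {ι κ : Type} {S : Set ℝ} {A : ι → κ → ℚ}

def HasImageIn (S : Set ℝ) (A : ι → κ → ℚ) (P : Set ℝ) (ε : ℝ) : Prop :=
  ∃ x : κ → ℝ, (∀ j, x j ∈ S) ∧ ∀ i, mEntry A x i ∈ P ∩ Set.Ioo 0 ε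

def ContainsImagesNearZero (S : Set ℝ) (A : ι → κ → ℚ) (P : Set ℝ) : Prop :=
  ∀ ε > 0, HasImageIn S A P ε

theorem I0Set_eq (S : Set ℝ) (A : ι → κ → ℚ) :
    I0Set S A = {p | S ∈ p} ∩ {p | ∀ P ∈ p, ContainsImagesNearZero S A P} := rfl

theorem isClosed_I0Set (S : Set ℝ) (A : ι → κ → ℚ) : IsClosed (I0Set S A) := by
  rw [I0Set_eq]
  exact (ultrafilter_isClosed_basic S).inter (Ultrafilter.isClosed_setOf_forall_mem_imp _)

theorem HasImageIn.mono {P : Set ℝ} {ε ε' : ℝ} (h : HasImageIn S A P ε) (hε : ε ≤ ε') :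
    HasImageIn S A P ε' :=
  let ⟨x, hxS, hx⟩ := h
  ⟨x, hxS, fun i => ⟨(hx i).1, (hx i).2.1, (hx i).2.2.trans_le hε⟩⟩

theorem eventually_not_hasImageIn {P : Set ℝ} (h : ¬ContainsImagesNearZero S A P) :
    ∀ᶠ ε in nhdsWithin 0 (Set.Ioi 0), 0 < ε ∧ ¬HasImageIn S A P ε := by
  obtain ⟨ε₀, hε₀, hno⟩ : ∃ ε₀ > 0, ¬HasImageIn S A P ε₀ := by
    simpa [ContainsImagesNearZero] using h
  filter_upwards [Ioo_mem_nhdsGT hε₀] with ε hε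
  exact ⟨hε.1, fun hP => hno (hP.mono hε.2.le)⟩

theorem IPRNearZero.exists_mono {C : Type*} [Finite C] [Nonempty C] (h : IPRNearZero S A)
    (c : ℝ → C) {δ : ℝ} (hδ : 0 < δ) :
    ∃ x : κ → ℝ, (∀ j, x j ∈ S) ∧ ∃ m : C, ∀ i, mEntry A x i ∈ S \ {0} ∧
      mEntry A x i ∈ Set.Ioo 0 δ ∧ c (mEntry A x i) = m := by
  obtain ⟨n, ⟨e⟩⟩ := Finite.exists_equiv_fin C
  obtain ⟨k, rfl⟩ : ∃ k, n = k + 1 :=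
    Nat.exists_eq_succ_of_ne_zero fun hn => (hn ▸ e) (Classical.arbitrary C) |>.elim0
  obtain ⟨x, hxS, m, hx⟩ := h k (e ∘ c) δ hδ
  exact ⟨x, hxS, e.symm m, fun i => ⟨(hx i).1, (hx i).2.1, e.eq_symm_apply.2 (hx i).2.2⟩⟩

theorem IPRNearZero.diff_sUnion_nonempty (h : IPRNearZero S A) (hS : S.Nonempty)
    (𝓑 : Finset (Set ℝ)) (h𝓑 : ∀ B ∈ 𝓑, ¬ContainsImagesNearZero S A B) :
    (S \ ⋃₀ ↑𝓑).Nonempty := by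
  by_contra hcover
  have hcover : S ⊆ ⋃₀ ↑𝓑 := Set.sdiff_eq_empty.1 (Set.not_nonempty_iff_eq_empty.1 hcover)
  obtain ⟨s, hs⟩ := hS
  obtain ⟨B₀, hB₀, -⟩ := hcover hs
  have : Nonempty 𝓑 := ⟨⟨B₀, hB₀⟩⟩
  obtain ⟨δ, hδ⟩ := (Filter.eventually_all.2 fun B : 𝓑 =>
    eventually_not_hasImageIn (h𝓑 B B.2)).exists
  let c : ℝ → 𝓑 := fun y => Classical.epsilon fun B : 𝓑 => y ∈ (B : Set ℝ)
  obtain ⟨x, hxS, m, hx⟩ := h.exists_mono c (hδ ⟨B₀, hB₀⟩).1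
  refine (hδ m).2 ⟨x, hxS, fun i => ⟨?_, (hx i).2.1⟩⟩
  obtain ⟨B, hB, hyB⟩ := hcover (hx i).1.1
  rw [← (hx i).2.2]
  exact Classical.epsilon_spec (p := fun B : 𝓑 => mEntry A x i ∈ (B : Set ℝ)) ⟨⟨B, hB⟩, hyB⟩

theorem I0Set_nonempty_of_IPRNearZero (hS : S.Nonempty) (h : IPRNearZero S A) :
    (I0Set S A).Nonempty :=
  Ultrafilter.exists_mem_forall_mem_of_diff_sUnion_nonempty (h.diff_sUnion_nonempty hS)

theorem IPRNearZero_of_mem_I0Set {p : Ultrafilter ℝ} (hp : p ∈ I0Set S A) :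
    IPRNearZero S A := by
  intro k c δ hδ
  obtain ⟨m, hm⟩ := (p.map c).eq_pure_of_finite
  have hmp : c ⁻¹' {m} ∈ p := Ultrafilter.mem_map.1 (hm ▸ Ultrafilter.mem_pure.2 rfl)
  obtain ⟨x, hxS, hx⟩ := hp.2 _ (Filter.inter_mem hp.1 hmp) δ hδ
  refine ⟨x, hxS, m, fun i => ?_⟩
  obtain ⟨⟨hiS, hic⟩, hiδ⟩ := hx i
  exact ⟨⟨hiS, hiδ.1.ne'⟩, hiδ, hic⟩

theorem mEntry_add (hA : ∀ i, (Function.support (A i)).Finite) (x y : κ → ℝ) (i : ι) :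
    mEntry A (x + y) i = mEntry A x i + mEntry A y i := by
  have hfin : ∀ z : κ → ℝ, (Function.support fun j => (A i j : ℝ) * z j).Finite := fun z =>
    (hA i).subset fun j hj => by
      simpa using left_ne_zero_of_mul hj
  simp only [mEntry, Pi.add_apply, mul_add]
  exact finsum_add_distrib (hfin x) (hfin y)

theorem uAdd_mem_I0Set [Finite ι] (hS : ∀ x ∈ S, ∀ y ∈ S, x + y ∈ S)
    (hA : ∀ i, (Function.support (A i)).Finite) {p q : Ultrafilter ℝ}
    (hp : p ∈ I0Set S A) (hq : q ∈ I0Set S A) : uAdd p q ∈ I0Set S A := by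
  refine ⟨mem_uAdd.2 <| Filter.mem_of_superset hp.1 fun a ha =>
    Filter.mem_of_superset hq.1 fun b hb => hS a ha b hb, fun P hP ε hε => ?_⟩
  obtain ⟨x, hxS, hx⟩ := hp.2 _ (mem_uAdd.1 hP) (ε / 2) (half_pos hε)
  have hxq : (⋂ i, {b | mEntry A x i + b ∈ P}) ∈ q := Filter.iInter_mem.2 fun i => (hx i).1
  obtain ⟨y, hyS, hy⟩ := hq.2 _ hxq (ε / 2) (half_pos hε)
  refine ⟨x + y, fun j => hS _ (hxS j) _ (hyS j), fun i => ?_⟩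
  rw [mEntry_add hA]
  obtain ⟨hxP, hx0, hxε⟩ := hx i
  obtain ⟨hyP, hy0, hyε⟩ := hy i
  exact ⟨Set.mem_iInter.1 hyP i, by positivity, by linarith⟩

end ImageNearZero

theorem stmt3_general {ι κ : Type} (S : Set ℝ)
    (hS : IsPosSubsemigroup S)
    (A : ι → κ → ℚ) :
    IsCompact (I0Set S A) ∧ ((I0Set S A).Nonempty ↔ IPRNearZero S A) ∧
      (∀ (u v : ℕ) (B : Fin u → Fin v → ℚ), IPRNearZero S B →
        ∀ p ∈ I0Set S B, ∀ q ∈ I0Set S B, uAdd p q ∈ I0Set S B) :=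
  ⟨(isClosed_I0Set S A).isCompact,
    ⟨fun ⟨_, hp⟩ => IPRNearZero_of_mem_I0Set hp, I0Set_nonempty_of_IPRNearZero hS.1⟩,
    fun _ _ _ _ _ hp _ hq => uAdd_mem_I0Set hS.2.2 (fun _ => Set.toFinite _) hp hq⟩

/-- `I₀(A;S)` is compact, is nonempty iff `A` is image partition regular
near zero over `S`; and for finite matrices that are image partition regular near zero
over `S`, `I₀(A;S)` is a subsemigroup of `(βS,+)`. -/
theorem stmt3 {ι κ : Type} [Countable ι] [Countable κ] (S : Set ℝ)
    (hS : IsPosSubsemigroup S) (hd : DenseNearZero S)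
    (A : ι → κ → ℚ) (hA : Admissible A) :
    IsCompact (I0Set S A) ∧ ((I0Set S A).Nonempty ↔ IPRNearZero S A) ∧
      (∀ (u v : ℕ) (B : Fin u → Fin v → ℚ), IPRNearZero S B →
        ∀ p ∈ I0Set S B, ∀ q ∈ I0Set S B, uAdd p q ∈ I0Set S B) :=
  stmt3_general S hS A
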